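/- Let D be a triangulated category with a t-structure 𝒰 = (U^{≤0}, U^{≥0}), let m be a positive integer, and set m-ℋ = U^{≥-(m-1)} ∩ U^{≤0}. Let ℰ1, ℰ2, ℰ3 be m-extended hearts on D with ℰ1 ≤ m-ℋ, ℰ2 ≤ m-ℋ, ℰ3 ≤ m-ℋ. If ℰ1 ≤ ℰ2 and ℰ2 ≤ ℰ3, then ℰ1 ≤ ℰ3. -/

import Mathlib

open CategoryTheory Category Limits Pretriangulated

universe v u

variable (D : Type u) [Category.{v} D] [Preadditive D] [HasZeroObject D]
  [HasShift D ℤ] [∀ n : ℤ, (shiftFunctor D n).Additive]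
  [Pretriangulated D] [HasBinaryBiproducts D]

/-- `shiftSet D S n` is the full subcategory `S[n]`: objects isomorphic to `X⟦n⟧`
with `X ∈ S`. -/
def shiftSet (S : Set D) (n : ℤ) : Set D :=
  {A | ∃ B ∈ S, Nonempty (A ≅ B⟦n⟧)}

/-- `starSet D X Y` is `X * Y`: the class of objects `A` admitting a distinguished
triangle `X → A → Y → X[1]` with `X ∈ 𝒳` and `Y ∈ 𝒴`. -/
def starSet (X Y : Set D) : Set D :=
  {A | ∃ (B C : D) (f : B ⟶ A) (g : A ⟶ C) (h : C ⟶ B⟦(1 : ℤ)⟧),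
    B ∈ X ∧ C ∈ Y ∧ Triangle.mk f g h ∈ distTriang D}

/-- `Hom(X, Y) = 0`: every morphism from an object of `X` to an object of `Y` is zero. -/
def homZero (X Y : Set D) : Prop :=
  ∀ A ∈ X, ∀ B ∈ Y, ∀ f : A ⟶ B, f = 0

/-- a class of objects closed under isomorphisms -/
def isoClosed (S : Set D) : Prop :=
  ∀ ⦃A B : D⦄, (A ≅ B) → A ∈ S → B ∈ S

/-- an additive full subcategory (closed under isomorphisms) which is closed under
direct summands -/
structure AdditiveClosed (S : Set D) : Prop where
  iso : isoClosed D S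
  zero : ∀ Z : D, IsZero Z → Z ∈ S
  sum : ∀ A ∈ S, ∀ B ∈ S, (A ⊞ B) ∈ S
  summand : ∀ A ∈ S, ∀ (X : D) (i : X ⟶ A) (p : A ⟶ X), i ≫ p = 𝟙 X → X ∈ S

/-- a torsion pair `(U, V)` in the triangulated category `D` -/
structure IsTorsionPair (U V : Set D) : Prop where
  addU : AdditiveClosed D U
  addV : AdditiveClosed D V
  hom_zero : homZero D U V
  cover : ∀ A : D, A ∈ starSet D U V

/-- `t₁ ≼ t₂` for torsion pairs in a triangulated category: `U₁ ⊆ U₂` and `U₁[1] ⊆ U₂`. -/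
def torsLE (U₁ U₂ : Set D) : Prop :=
  U₁ ⊆ U₂ ∧ shiftSet D U₁ 1 ⊆ U₂

/-- a torsion pair `(T, F)` in an (extension-closed) full subcategory `H` of `D`:
`T` and `F` are additive subcategories of `H` closed under direct summands,
`Hom(T, F) = 0`, and every object of `H` admits a distinguished triangle
`T → X → F → T[1]` with `T ∈ 𝒯`, `F ∈ ℱ`. -/
structure IsTorsionPairIn (H T F : Set D) : Prop where
  subT : T ⊆ H
  subF : F ⊆ H
  isoT : ∀ ⦃A B : D⦄, (A ≅ B) → A ∈ T → B ∈ H → B ∈ T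
  isoF : ∀ ⦃A B : D⦄, (A ≅ B) → A ∈ F → B ∈ H → B ∈ F
  zeroT : ∀ Z : D, IsZero Z → Z ∈ H → Z ∈ T
  zeroF : ∀ Z : D, IsZero Z → Z ∈ H → Z ∈ F
  sumT : ∀ A ∈ T, ∀ B ∈ T, (A ⊞ B) ∈ T
  sumF : ∀ A ∈ F, ∀ B ∈ F, (A ⊞ B) ∈ F
  summandT : ∀ A ∈ T, ∀ (X : D) (i : X ⟶ A) (p : A ⟶ X), i ≫ p = 𝟙 X → X ∈ H → X ∈ T
  summandF : ∀ A ∈ F, ∀ (X : D) (i : X ⟶ A) (p : A ⟶ X), i ≫ p = 𝟙 X → X ∈ H → X ∈ F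
  hom_zero : homZero D T F
  cover : ∀ A ∈ H, A ∈ starSet D T F

/-- an `s`-torsion pair in `H`: a torsion pair with moreover `Hom(T, F[-1]) = 0`. -/
structure IsSTorsionPairIn (H T F : Set D) extends IsTorsionPairIn D H T F : Prop where
  neg_hom_zero : ∀ A ∈ T, ∀ B ∈ F, ∀ f : A ⟶ B⟦(-1 : ℤ)⟧, f = 0

/-- the relation `≼` for torsion pairs in a subcategory `H`:
`Hom(T, F') = 0` and `Hom(T, F'[-1]) = 0`. -/
def torsLEIn (T F' : Set D) : Prop :=
  homZero D T F' ∧ homZero D T (shiftSet D F' (-1))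

/-- a `t`-structure `(L, G) = (S^{≤0}, S^{≥0})` on a triangulated (full) subcategory `S`
of `D` (take `S = Set.univ` for a `t`-structure on `D` itself). -/
structure IsTStructureOn (S L G : Set D) : Prop where
  subL : L ⊆ S
  subG : G ⊆ S
  isoL : ∀ ⦃A B : D⦄, (A ≅ B) → A ∈ L → B ∈ S → B ∈ L
  isoG : ∀ ⦃A B : D⦄, (A ≅ B) → A ∈ G → B ∈ S → B ∈ G
  hom_zero : homZero D L (shiftSet D G (-1))
  cover : ∀ A ∈ S, A ∈ starSet D L (shiftSet D G (-1))
  shiftL : L ⊆ shiftSet D L (-1)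
  shiftG : shiftSet D G (-1) ⊆ G

/-- a `t`-structure `(L, G) = (D^{≤0}, D^{≥0})` on `D`. -/
def IsTStructure (L G : Set D) : Prop := IsTStructureOn D Set.univ L G

/-- a triangulated full subcategory of `D`. -/
structure IsTriangulatedSub (S : Set D) : Prop where
  iso : isoClosed D S
  zero : ∀ Z : D, IsZero Z → Z ∈ S
  shift : ∀ (n : ℤ), ∀ A ∈ S, A⟦n⟧ ∈ S
  ext₂ : ∀ (T : Triangle D), (T ∈ distTriang D) → T.obj₁ ∈ S → T.obj₃ ∈ S → T.obj₂ ∈ S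

/-- an `m`-extended heart on `D`: a full subcategory of the form
`V^{≥ -(m-1)} ∩ V^{≤ 0}` for some `t`-structure `(V^{≤0}, V^{≥0})` on `D`. -/
def IsExtendedHeart (m : ℤ) (E : Set D) : Prop :=
  ∃ L G : Set D, IsTStructure D L G ∧ E = shiftSet D G (m - 1) ∩ L

/-- the relation `E₁ ≤ E₂` for `m`-extended hearts:
`E₁ ⊆ E₂[m] * E₂` and `E₂ ⊆ E₁ * E₁[-m]`. -/
def extHeartLE (m : ℤ) (E₁ E₂ : Set D) : Prop :=
  E₁ ⊆ starSet D (shiftSet D E₂ m) E₂ ∧ E₂ ⊆ starSet D E₁ (shiftSet D E₁ (-m))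


/-! Write `ℰ₁ = G₁[m-1] ∩ L₁` and `ℰ₃ = G₃[m-1] ∩ L₃` for t-structures `(Lᵢ, Gᵢ)`; with the
convention `S[n] = shiftSet D S n`, `L[a]` is `D^{≤ -a}` and `G[b]` is `D^{≥ -b}`.
Aisles and coaisles are closed under extensions, so `ℰ ≤ ℱ` transfers aisle and coaisle bounds
between `ℰ` and `ℱ`, losing at most a shift by `m`. Chaining these transfers through `ℰ₂` and
through `m-ℋ` puts `ℰ₁` in `D₃^{[-2m+1, 0]}` and `ℰ₃` in `D₁^{[-m+1, m]}`. Truncating an object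
of `ℰ₁` at degree `-m` for the third t-structure then splits it into pieces of `ℰ₃[m]` and `ℰ₃`,
and truncating an object of `ℰ₃` at degree `0` for the first splits it into pieces of `ℰ₁` and
`ℰ₁[-m]`. -/

section

variable {D}

omit [HasBinaryBiproducts D]

section ShiftSet

omit [Preadditive D] [HasZeroObject D] [∀ n : ℤ, (shiftFunctor D n).Additive] [Pretriangulated D]

theorem mem_shiftSet_of_mem {S : Set D} {X : D} (hX : X ∈ S) (n : ℤ) :
    X⟦n⟧ ∈ shiftSet D S n :=
  ⟨X, hX, ⟨Iso.refl _⟩⟩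

theorem subset_shiftSet_zero (S : Set D) : S ⊆ shiftSet D S 0 :=
  fun X hX => ⟨X, hX, ⟨((shiftFunctorZero D ℤ).app X).symm⟩⟩

theorem shiftSet_zero_subset {S : Set D} (hS : isoClosed D S) : shiftSet D S 0 ⊆ S := by
  rintro X ⟨Y, hY, ⟨e⟩⟩
  exact hS (((shiftFunctorZero D ℤ).app Y).symm ≪≫ e.symm) hY

theorem isoClosed_shiftSet (S : Set D) (n : ℤ) : isoClosed D (shiftSet D S n) := by
  rintro X X' e ⟨Y, hY, ⟨e'⟩⟩
  exact ⟨Y, hY, ⟨e.symm ≪≫ e'⟩⟩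

theorem shiftSet_mono {S T : Set D} (h : S ⊆ T) (n : ℤ) : shiftSet D S n ⊆ shiftSet D T n := by
  rintro X ⟨Y, hY, e⟩
  exact ⟨Y, h hY, e⟩

theorem shiftSet_shiftSet (S : Set D) {a b c : ℤ} (h : a + b = c) :
    shiftSet D (shiftSet D S a) b = shiftSet D S c := by
  ext X
  constructor
  · rintro ⟨Y, ⟨Z, hZ, ⟨e⟩⟩, ⟨e'⟩⟩
    exact ⟨Z, hZ, ⟨e' ≪≫ (shiftFunctor D b).mapIso e ≪≫
      ((shiftFunctorAdd' D a b c h).app Z).symm⟩⟩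
  · rintro ⟨Z, hZ, ⟨e⟩⟩
    exact ⟨Z⟦a⟧, mem_shiftSet_of_mem hZ a, ⟨e ≪≫ (shiftFunctorAdd' D a b c h).app Z⟩⟩

theorem shift_mem_shiftSet {S : Set D} {X : D} {a : ℤ} (hX : X ∈ shiftSet D S a) (b : ℤ)
    {c : ℤ} (h : a + b = c) : X⟦b⟧ ∈ shiftSet D S c :=
  shiftSet_shiftSet S h ▸ mem_shiftSet_of_mem hX b

theorem shiftSet_inter_shiftSet_subset {S T : Set D} (hT : isoClosed D T) (n : ℤ) :
    shiftSet D S n ∩ shiftSet D T n ⊆ shiftSet D (S ∩ T) n := by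
  rintro X ⟨⟨Y, hY, ⟨e⟩⟩, ⟨Z, hZ, ⟨e'⟩⟩⟩
  exact ⟨Y, ⟨hY, hT ((shiftFunctor D n).preimageIso (e'.symm ≪≫ e)) hZ⟩, ⟨e⟩⟩

end ShiftSet

omit [HasZeroObject D] [Pretriangulated D] in
theorem homZero_shiftSet_shiftSet {U V : Set D} (h : homZero D U V) (n : ℤ) :
    homZero D (shiftSet D U n) (shiftSet D V n) := by
  rintro X ⟨X₀, hX₀, ⟨e⟩⟩ Y ⟨Y₀, hY₀, ⟨e'⟩⟩ f
  obtain ⟨g, hg⟩ := (shiftFunctor D n).map_surjective (e.inv ≫ f ≫ e'.hom)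
  have hconj : e.inv ≫ f ≫ e'.hom = 0 := by
    rw [← hg, h X₀ hX₀ Y₀ hY₀ g, Functor.map_zero]
  simpa using e.hom ≫= hconj =≫ e'.inv

theorem starSet_mono {U U' V V' : Set D} (hU : U ⊆ U') (hV : V ⊆ V') :
    starSet D U V ⊆ starSet D U' V' := by
  rintro A ⟨B, C, u, v, w, hB, hC, hd⟩
  exact ⟨B, C, u, v, w, hU hB, hV hC, hd⟩

theorem mem_starSet_iff {U V : Set D} {A : D} :
    A ∈ starSet D U V ↔ ∃ T ∈ distTriang D, T.obj₁ ∈ U ∧ T.obj₃ ∈ V ∧ T.obj₂ = A := by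
  constructor
  · rintro ⟨B, C, u, v, w, hB, hC, hd⟩
    exact ⟨_, hd, hB, hC, rfl⟩
  · rintro ⟨T, hT, hB, hC, rfl⟩
    exact ⟨_, _, T.mor₁, T.mor₂, T.mor₃, hB, hC, hT⟩

theorem mem_starSet_of_iso {U V : Set D} {A A' : D} (e : A ≅ A') (hA : A ∈ starSet D U V) :
    A' ∈ starSet D U V := by
  obtain ⟨T, hT, hB, hC, rfl⟩ := mem_starSet_iff.1 hA
  refine mem_starSet_iff.2 ⟨Triangle.mk (T.mor₁ ≫ e.hom) (e.inv ≫ T.mor₂) T.mor₃,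
    isomorphic_distinguished _ hT _ ?_, hB, hC, rfl⟩
  exact Triangle.isoMk _ _ (Iso.refl _) e.symm (Iso.refl _) (by simp [Triangle.mk])
    (by simp [Triangle.mk]) (by simp [Triangle.mk])

theorem shift_mem_starSet {U V : Set D} {A : D} (hA : A ∈ starSet D U V) (n : ℤ) :
    A⟦n⟧ ∈ starSet D (shiftSet D U n) (shiftSet D V n) := by
  obtain ⟨B, C, u, v, w, hB, hC, hd⟩ := hA
  exact ⟨_, _, _, _, _, mem_shiftSet_of_mem hB n, mem_shiftSet_of_mem hC n,
    Triangle.shift_distinguished _ hd n⟩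

theorem homZero_starSet_left {U V W : Set D} (hU : homZero D U W) (hV : homZero D V W) :
    homZero D (starSet D U V) W := by
  intro A hA Y hY f
  obtain ⟨T, hT, hB, hC, rfl⟩ := mem_starSet_iff.1 hA
  obtain ⟨g, rfl⟩ := Triangle.yoneda_exact₂ T hT f (hU _ hB Y hY _)
  rw [hV _ hC Y hY g, comp_zero]

theorem homZero_starSet_right {U V W : Set D} (hU : homZero D W U) (hV : homZero D W V) :
    homZero D W (starSet D U V) := by
  intro Y hY A hA f
  obtain ⟨T, hT, hB, hC, rfl⟩ := mem_starSet_iff.1 hA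
  obtain ⟨g, rfl⟩ := Triangle.coyoneda_exact₂ T hT f (hV Y hY _ hC _)
  rw [hU Y hY _ hB g, zero_comp]

namespace IsTStructure

variable {L G : Set D} (ht : IsTStructure D L G)
include ht

theorem isoClosed_aisle : isoClosed D L :=
  fun _ _ e hA => IsTStructureOn.isoL ht e hA (Set.mem_univ _)

theorem shiftSet_aisle_antitone {a a' : ℤ} (h : a' ≤ a) :
    shiftSet D L a ⊆ shiftSet D L a' := by
  refine Int.leInductionDown (motive := fun a' _ => shiftSet D L a ⊆ shiftSet D L a')
    subset_rfl (fun n _ ih => ih.trans ?_) a' h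
  exact (shiftSet_mono (IsTStructureOn.shiftL ht) n).trans
    (shiftSet_shiftSet L (by ring)).subset

theorem homZero_shiftSet {a b : ℤ} (h : b < a) :
    homZero D (shiftSet D L a) (shiftSet D G b) := by
  intro X hX Y hY
  have h' := homZero_shiftSet_shiftSet (IsTStructureOn.hom_zero ht) (b + 1)
  rw [shiftSet_shiftSet G (show -1 + (b + 1) = b by ring)] at h'
  exact h' X (ht.shiftSet_aisle_antitone (by omega) hX) Y hY

theorem mem_starSet_shiftSet (A : D) (k : ℤ) :
    A ∈ starSet D (shiftSet D L k) (shiftSet D G (k - 1)) := by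
  have h := shift_mem_starSet (IsTStructureOn.cover ht (A⟦-k⟧) (Set.mem_univ _)) k
  rw [shiftSet_shiftSet G (show -1 + k = k - 1 by ring)] at h
  exact mem_starSet_of_iso (((shiftFunctorAdd' D (-k) k 0 (by ring)).app A).symm ≪≫
    (shiftFunctorZero D ℤ).app A) h

theorem mem_shiftSet_aisle_of_homZero {A : D} (a : ℤ)
    (hA : ∀ Y ∈ shiftSet D G (a - 1), ∀ f : A ⟶ Y, f = 0) : A ∈ shiftSet D L a := by
  obtain ⟨T, hT, hP, hQ, rfl⟩ := mem_starSet_iff.1 (ht.mem_starSet_shiftSet A a)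
  obtain ⟨ψ, hψ⟩ := Triangle.yoneda_exact₃ T hT (𝟙 _) (by simpa using hA _ hQ T.mor₂)
  have hψ₀ : ψ = 0 :=
    ht.homZero_shiftSet (show a - 1 < a + 1 by omega) _ (shift_mem_shiftSet hP 1 rfl) _ hQ ψ
  have hQ₀ : IsZero T.obj₃ := by rw [IsZero.iff_id_eq_zero, hψ, hψ₀, comp_zero]
  have := (Triangle.isZero₃_iff_isIso₁ T hT).1 hQ₀
  exact isoClosed_shiftSet L a (asIso T.mor₁) hP

theorem mem_shiftSet_coaisle_of_homZero {A : D} (b : ℤ)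
    (hA : ∀ X ∈ shiftSet D L (b + 1), ∀ f : X ⟶ A, f = 0) : A ∈ shiftSet D G b := by
  obtain ⟨T, hT, hP, hQ, rfl⟩ := mem_starSet_iff.1 (ht.mem_starSet_shiftSet A (b + 1))
  rw [add_sub_cancel_right] at hQ
  obtain ⟨s, hs⟩ := Triangle.coyoneda_exact₂ _ (inv_rot_of_distTriang T hT) (𝟙 _)
    ((id_comp _).trans (hA _ hP T.mor₁))
  have hs₀ : s = 0 :=
    ht.homZero_shiftSet (show b + -1 < b + 1 by omega) _ hP _ (shift_mem_shiftSet hQ (-1) rfl) s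
  have hP₀ : IsZero T.obj₁ :=
    (IsZero.iff_id_eq_zero _).2 (hs.trans (by rw [hs₀]; exact zero_comp))
  have := (Triangle.isZero₁_iff_isIso₂ T hT).1 hP₀
  exact isoClosed_shiftSet G b (asIso T.mor₂).symm hQ

theorem shiftSet_coaisle_mono {b b' : ℤ} (h : b ≤ b') : shiftSet D G b ⊆ shiftSet D G b' :=
  fun _ hA => ht.mem_shiftSet_coaisle_of_homZero b' fun X hX =>
    ht.homZero_shiftSet (by omega) X hX _ hA

theorem starSet_shiftSet_aisle_subset (a : ℤ) :
    starSet D (shiftSet D L a) (shiftSet D L a) ⊆ shiftSet D L a := fun A hA =>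
  ht.mem_shiftSet_aisle_of_homZero a fun Y hY =>
    homZero_starSet_left (ht.homZero_shiftSet (by omega)) (ht.homZero_shiftSet (by omega))
      A hA Y hY

theorem starSet_shiftSet_coaisle_subset (b : ℤ) :
    starSet D (shiftSet D G b) (shiftSet D G b) ⊆ shiftSet D G b := fun A hA =>
  ht.mem_shiftSet_coaisle_of_homZero b fun X hX =>
    homZero_starSet_right (ht.homZero_shiftSet (by omega)) (ht.homZero_shiftSet (by omega))
      X hX A hA

theorem mem_starSet_inter_of_mem_inter {A : D} {a b : ℤ}
    (hA : A ∈ shiftSet D L a ∩ shiftSet D G b) {k : ℤ} (hkb : k ≤ b) (hak : a ≤ k + 1) :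
    A ∈ starSet D (shiftSet D L k ∩ shiftSet D G b)
      (shiftSet D L a ∩ shiftSet D G (k - 1)) := by
  obtain ⟨T, hT, hB, hC, rfl⟩ := mem_starSet_iff.1 (ht.mem_starSet_shiftSet A k)
  refine mem_starSet_iff.2 ⟨T, hT, ⟨hB, ?_⟩, ⟨?_, hC⟩, rfl⟩
  · refine ht.mem_shiftSet_coaisle_of_homZero b fun X hX f => ?_
    obtain ⟨g, rfl⟩ := Triangle.coyoneda_exact₂ _ (inv_rot_of_distTriang T hT) f
      (ht.homZero_shiftSet (by omega) X hX _ hA.2 _)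
    rw [ht.homZero_shiftSet (show k - 1 + -1 < b + 1 by omega) X hX _
      (shift_mem_shiftSet hC (-1) rfl) g]
    exact zero_comp
  · refine ht.mem_shiftSet_aisle_of_homZero a fun Y hY f => ?_
    obtain ⟨g, rfl⟩ := Triangle.yoneda_exact₃ T hT f
      (ht.homZero_shiftSet (by omega) _ hA.1 Y hY _)
    rw [ht.homZero_shiftSet (show a - 1 < k + 1 by omega) _
      (shift_mem_shiftSet hB 1 rfl) Y hY g]
    exact comp_zero

theorem shiftSet_aisle_inter_coaisle_subset {n b b' : ℤ} (h : b + n = b') :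
    shiftSet D L n ∩ shiftSet D G b' ⊆ shiftSet D (shiftSet D G b ∩ L) n := by
  rw [← shiftSet_shiftSet G h, Set.inter_comm]
  exact shiftSet_inter_shiftSet_subset ht.isoClosed_aisle n

theorem shiftSet_aisle_zero_inter_subset (b : ℤ) :
    shiftSet D L 0 ∩ shiftSet D G b ⊆ shiftSet D G b ∩ L :=
  fun _ hA => ⟨hA.2, shiftSet_zero_subset ht.isoClosed_aisle hA.1⟩

end IsTStructure

namespace extHeartLE

variable {m : ℤ} {E F : Set D} (hle : extHeartLE D m E F) (hm : 0 ≤ m)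
  {L G : Set D} (ht : IsTStructure D L G)
include hle hm ht

theorem left_subset_shiftSet_aisle {a : ℤ} (hF : F ⊆ shiftSet D L a) :
    E ⊆ shiftSet D L a := by
  refine hle.1.trans ((starSet_mono ?_ hF).trans (ht.starSet_shiftSet_aisle_subset a))
  exact (shiftSet_mono hF m).trans
    ((shiftSet_shiftSet L rfl).subset.trans (ht.shiftSet_aisle_antitone (by omega)))

theorem left_subset_shiftSet_coaisle {b b' : ℤ} (hF : F ⊆ shiftSet D G b) (h : b + m ≤ b') :
    E ⊆ shiftSet D G b' := by
  refine hle.1.trans ((starSet_mono ?_ ?_).trans (ht.starSet_shiftSet_coaisle_subset b'))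
  · exact (shiftSet_mono hF m).trans
      ((shiftSet_shiftSet G rfl).subset.trans (ht.shiftSet_coaisle_mono h))
  · exact hF.trans (ht.shiftSet_coaisle_mono (by omega))

theorem right_subset_shiftSet_coaisle {b : ℤ} (hE : E ⊆ shiftSet D G b) :
    F ⊆ shiftSet D G b := by
  refine hle.2.trans ((starSet_mono hE ?_).trans (ht.starSet_shiftSet_coaisle_subset b))
  exact (shiftSet_mono hE (-m)).trans
    ((shiftSet_shiftSet G rfl).subset.trans (ht.shiftSet_coaisle_mono (by omega)))

theorem right_subset_shiftSet_aisle {a a' : ℤ} (hE : E ⊆ shiftSet D L a) (h : a' + m ≤ a) :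
    F ⊆ shiftSet D L a' := by
  refine hle.2.trans ((starSet_mono ?_ ?_).trans (ht.starSet_shiftSet_aisle_subset a'))
  · exact hE.trans (ht.shiftSet_aisle_antitone (by omega))
  · exact (shiftSet_mono hE (-m)).trans
      ((shiftSet_shiftSet L rfl).subset.trans (ht.shiftSet_aisle_antitone (by omega)))

end extHeartLE

end

theorem stmt13 (m : ℤ) (hm : 1 ≤ m) (H : Set D) (E₁ E₂ E₃ : Set D)
    (h₁ : IsExtendedHeart D m E₁) (h₃ : IsExtendedHeart D m E₃)
    (h₁H : extHeartLE D m E₁ H) (h₃H : extHeartLE D m E₃ H)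
    (h12 : extHeartLE D m E₁ E₂) (h23 : extHeartLE D m E₂ E₃) :
    extHeartLE D m E₁ E₃ := by
  obtain ⟨L₁, G₁, ht₁, rfl⟩ := h₁
  obtain ⟨L₃, G₃, ht₃, rfl⟩ := h₃
  have hm₀ : 0 ≤ m := by omega
  constructor
  · have hL₃ : shiftSet D G₁ (m - 1) ∩ L₁ ⊆ shiftSet D L₃ 0 :=
      h12.left_subset_shiftSet_aisle hm₀ ht₃ (h23.left_subset_shiftSet_aisle hm₀ ht₃
        (Set.inter_subset_right.trans (subset_shiftSet_zero L₃)))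
    have hG₃ : shiftSet D G₁ (m - 1) ∩ L₁ ⊆ shiftSet D G₃ (m - 1 + m) :=
      h₁H.left_subset_shiftSet_coaisle hm₀ ht₃
        (h₃H.right_subset_shiftSet_coaisle hm₀ ht₃ Set.inter_subset_left) le_rfl
    exact fun A hA => starSet_mono (ht₃.shiftSet_aisle_inter_coaisle_subset rfl)
      (ht₃.shiftSet_aisle_zero_inter_subset _)
      (ht₃.mem_starSet_inter_of_mem_inter ⟨hL₃ hA, hG₃ hA⟩ (k := m) (by omega) (by omega))
  · have hG₁ : shiftSet D G₃ (m - 1) ∩ L₃ ⊆ shiftSet D G₁ (m - 1) :=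
      h23.right_subset_shiftSet_coaisle hm₀ ht₁
        (h12.right_subset_shiftSet_coaisle hm₀ ht₁ Set.inter_subset_left)
    have hL₁ : shiftSet D G₃ (m - 1) ∩ L₃ ⊆ shiftSet D L₁ (-m) :=
      h₃H.left_subset_shiftSet_aisle hm₀ ht₁ (h₁H.right_subset_shiftSet_aisle hm₀ ht₁
        (Set.inter_subset_right.trans (subset_shiftSet_zero L₁)) (by omega))
    exact fun A hA => starSet_mono (ht₁.shiftSet_aisle_zero_inter_subset _)
      (ht₁.shiftSet_aisle_inter_coaisle_subset (by ring))
      (ht₁.mem_starSet_inter_of_mem_inter ⟨hL₁ hA, hG₁ hA⟩ (k := 0) (by omega) (by omega))
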